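/- arXiv:2010.14410 — 4 statements merged into one kernel-verified Lean document; each statement's English description precedes it below -/
import Mathlib

section
/- Let K > 0. There is a constant A > 0 depending only on K such that for all integers n and N with n > 2(K+1)², 2 ≤ N and N³ ≤ n, and all real numbers t_{ij} ∈ [−K−1, K+1] (1 ≤ i < j ≤ N), there exists a real number θ with |θ| ≤ A·N³/n such that ∏_{1≤i<j≤N} cos(t_{ij}/√n)^{n−i−1} = (1 + θ) · ∏_{1≤i<j≤N} e^{−t_{ij}²/2}. -/
/-! For `x² ≤ 1/2` one has `log cos x = -x²/2 + O(x⁴)`, so with `x = t/√n` the logarithm of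
`cos (t/√n) ^ (n - i - 1)` is `-t²/2 · (n - i - 1)/n + O(1/n) = -t²/2 + O(N/n)`, as `i + 1 ≤ N`.
Summed over the fewer than `N²` pairs, the total error `U` of the logarithms is `O(N³/n)`,
which is bounded because `N³ ≤ n`; hence `θ = exp U - 1` obeys `|θ| ≤ |U| exp |U| = O(N³/n)`. -/

open Real Finset

lemma cos_pos_of_sq_lt_two {x : ℝ} (hx : x ^ 2 < 2) : 0 < cos x := by
  linarith [one_sub_sq_div_two_le_cos (x := x)]

lemma abs_log_cos_add_sq_div_two_le {x : ℝ} (hx : x ^ 2 ≤ 1 / 2) :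
    |log (cos x) + x ^ 2 / 2| ≤ x ^ 4 := by
  have hcos : 0 < cos x := cos_pos_of_sq_lt_two (by linarith)
  have hx1 : |x| ≤ 1 := by
    rw [← sq_le_one_iff_abs_le_one]; linarith
  obtain ⟨hcos_ge, hcos_le⟩ := abs_le.mp (cos_bound hx1)
  rw [Even.pow_abs ⟨2, rfl⟩] at hcos_ge hcos_le
  have hlog_le := log_le_sub_one_of_pos hcos
  have hlog_ge := one_sub_inv_le_log_of_pos hcos
  have hinv : (cos x)⁻¹ ≤ 1 + x ^ 2 / 2 + x ^ 4 := by
    rw [inv_le_iff_one_le_mul₀ hcos]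
    nlinarith [sq_nonneg x, pow_nonneg (sq_nonneg x) 2,
      mul_nonneg (sq_nonneg x) (pow_nonneg (sq_nonneg x) 2)]
  rw [abs_le]
  constructor <;> linarith

lemma abs_exp_sub_one_le_abs_mul_exp_abs (u : ℝ) : |exp u - 1| ≤ |u| * exp |u| := by
  rcases le_total 0 u with hu | hu
  · have : exp (-u) * exp u = 1 := by rw [← exp_add]; simp
    rw [abs_of_nonneg hu, abs_of_nonneg (by linarith [add_one_le_exp u])]
    nlinarith [add_one_le_exp (-u), exp_pos u]
  · rw [abs_of_nonpos hu, abs_of_nonpos (by linarith [exp_le_one_iff.mpr hu])]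
    nlinarith [add_one_le_exp u, add_one_le_exp (-u)]

lemma abs_mul_log_cos_div_sqrt_add_sq_div_two_le {n m t : ℝ} (hn : 0 < n) (hm : 0 ≤ m)
    (hmn : m ≤ n) (ht : 2 * t ^ 2 ≤ n) :
    |m * log (cos (t / √n)) + t ^ 2 / 2| ≤ t ^ 4 / n + t ^ 2 * (n - m) / (2 * n) := by
  set x := t / √n
  have hx : x ^ 2 = t ^ 2 / n := by rw [div_pow, sq_sqrt hn.le]
  have hsplit : m * log (cos x) + t ^ 2 / 2
      = m * (log (cos x) + x ^ 2 / 2) + t ^ 2 * (n - m) / (2 * n) := by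
    rw [hx]; field_simp; ring
  have hmain : |m * (log (cos x) + x ^ 2 / 2)| ≤ t ^ 4 / n := calc
    _ ≤ n * x ^ 4 := by
      rw [abs_mul, abs_of_nonneg hm]
      gcongr
      exact abs_log_cos_add_sq_div_two_le (by rw [hx, div_le_iff₀ hn]; linarith)
    _ = t ^ 4 / n := by rw [show x ^ 4 = (x ^ 2) ^ 2 by ring, hx]; field_simp
  rw [hsplit]
  refine (abs_add_le _ _).trans ?_
  have hrest : 0 ≤ t ^ 2 * (n - m) / (2 * n) :=
    div_nonneg (mul_nonneg (sq_nonneg t) (sub_nonneg.mpr hmn)) (by positivity)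
  rw [abs_of_nonneg hrest]
  linarith

lemma exists_prod_pow_eq_one_add_mul_prod_exp {ι : Type*} (s : Finset ι) {a g : ι → ℝ}
    {m : ι → ℕ} {ε : ℝ} (ha : ∀ k ∈ s, 0 < a k) (h : ∀ k ∈ s, |m k * log (a k) - g k| ≤ ε) :
    ∃ θ, |θ| ≤ #s * ε * exp (#s * ε) ∧
      ∏ k ∈ s, a k ^ m k = (1 + θ) * ∏ k ∈ s, exp (g k) := by
  set U := ∑ k ∈ s, (m k * log (a k) - g k) with hU_def
  have hU : |U| ≤ #s * ε := calc
    |U| ≤ ∑ k ∈ s, |m k * log (a k) - g k| := abs_sum_le_sum_abs _ _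
    _ ≤ #s * ε := by simpa using sum_le_card_nsmul s _ ε h
  refine ⟨exp U - 1, ?_, ?_⟩
  · calc |exp U - 1| ≤ |U| * exp |U| := abs_exp_sub_one_le_abs_mul_exp_abs U
      _ ≤ #s * ε * exp (#s * ε) := by have := (abs_nonneg U).trans hU; gcongr
  · rw [add_sub_cancel, ← exp_sum, ← exp_add, hU_def, sum_sub_distrib, sub_add_cancel, exp_sum]
    refine prod_congr rfl fun k hk => ?_
    rw [exp_nat_mul, exp_log (ha k hk)]

lemma abs_cast_sub_mul_log_cos_div_sqrt_add_le {n i N : ℕ} {t B : ℝ} (hiN : i + 1 ≤ N)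
    (hNn : N ≤ n) (hn : 2 * B < n) (ht : t ^ 2 ≤ B) :
    |((n - i - 1 : ℕ) : ℝ) * log (cos (t / √n)) + t ^ 2 / 2| ≤ (B ^ 2 + B) * N / n := by
  have hB : 0 ≤ B := (sq_nonneg t).trans ht
  have hn0 : (0 : ℝ) < n := by linarith
  have hm : ((n - i - 1 : ℕ) : ℝ) = n - (i + 1) := by
    rw [Nat.sub_sub, Nat.cast_sub (hiN.trans hNn)]; push_cast; ring
  have hiN' : (i : ℝ) + 1 ≤ N := by exact_mod_cast hiN
  refine (abs_mul_log_cos_div_sqrt_add_sq_div_two_le hn0 (Nat.cast_nonneg _) ?_ ?_).trans ?_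
  · rw [hm]; linarith
  · linarith
  have h4 : t ^ 4 ≤ B ^ 2 * N := calc
    t ^ 4 = (t ^ 2) ^ 2 := by ring
    _ ≤ B ^ 2 := by gcongr
    _ ≤ B ^ 2 * N := le_mul_of_one_le_right (by positivity) (by linarith)
  have h2 : t ^ 2 * (i + 1) ≤ 2 * (B * N) := by
    linarith [mul_le_mul ht hiN' (by positivity) hB, mul_nonneg hB (Nat.cast_nonneg N)]
  have hsplit : (B ^ 2 + B) * N / n = B ^ 2 * N / n + 2 * (B * N) / (2 * n) := by
    field_simp
  rw [hm, sub_sub_cancel, hsplit]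
  gcongr

lemma card_sigma_Icc_succ_le (N : ℕ) : #((Icc 1 N).sigma fun i => Icc (i + 1) N) ≤ N ^ 2 := by
  rw [card_sigma, sq]
  simpa using sum_le_card_nsmul (Icc 1 N) _ N fun i _ => by simp

/-- ∏_{i<j} cos(t_{ij}/√n)^{n-i-1} = (1+θ)·∏_{i<j} e^{-t_{ij}²/2}
with |θ| ≤ A·N³/n, for t_{ij} ∈ [-K-1, K+1]. -/
theorem prod_cos_pow_eq_gaussian (K : ℝ) (hK : 0 < K) :
    ∃ A : ℝ, 0 < A ∧
      ∀ (n N : ℕ), 2 * (K + 1) ^ 2 < (n : ℝ) → 2 ≤ N → N ^ 3 ≤ n →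
      ∀ t : ℕ → ℕ → ℝ,
        (∀ i j : ℕ, 1 ≤ i → i < j → j ≤ N → t i j ∈ Set.Icc (-K - 1) (K + 1)) →
      ∃ θ : ℝ, |θ| ≤ A * (N : ℝ) ^ 3 / (n : ℝ) ∧
        (∏ i ∈ Finset.Icc 1 N, ∏ j ∈ Finset.Icc (i + 1) N,
            Real.cos (t i j / Real.sqrt n) ^ (n - i - 1)) =
        (1 + θ) * ∏ i ∈ Finset.Icc 1 N, ∏ j ∈ Finset.Icc (i + 1) N,
            Real.exp (-(t i j) ^ 2 / 2) := by
  set C := ((K + 1) ^ 2) ^ 2 + (K + 1) ^ 2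
  refine ⟨C * exp C, by positivity, fun n N hn hN hNn t ht => ?_⟩
  set T := (Icc 1 N).sigma fun i => Icc (i + 1) N
  have hn0 : (0 : ℝ) < n := lt_of_le_of_lt (by positivity) hn
  have hN3 : (N : ℝ) ^ 3 ≤ n := by exact_mod_cast hNn
  have hT : (#T : ℝ) ≤ N ^ 2 := by exact_mod_cast card_sigma_Icc_succ_le N
  have ht_sq : ∀ p ∈ T, t p.1 p.2 ^ 2 ≤ (K + 1) ^ 2 := by
    intro p hp
    simp only [T, mem_sigma, mem_Icc] at hp
    obtain ⟨hlo, hhi⟩ := ht p.1 p.2 hp.1.1 (by omega) hp.2.2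
    exact sq_le_sq' (by linarith) hhi
  have hcos : ∀ p ∈ T, 0 < cos (t p.1 p.2 / √n) := by
    intro p hp
    refine cos_pos_of_sq_lt_two ?_
    rw [div_pow, sq_sqrt hn0.le, div_lt_iff₀ hn0]
    linarith [ht_sq p hp]
  have hpair : ∀ p ∈ T,
      |((n - p.1 - 1 : ℕ) : ℝ) * log (cos (t p.1 p.2 / √n)) - -t p.1 p.2 ^ 2 / 2| ≤ C * N / n := by
    intro p hp
    have hiN : p.1 + 1 ≤ N := by simp only [T, mem_sigma, mem_Icc] at hp; omega
    rw [neg_div, sub_neg_eq_add]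
    exact abs_cast_sub_mul_log_cos_div_sqrt_add_le hiN
      ((Nat.le_self_pow (by norm_num) N).trans hNn) hn (ht_sq p hp)
  obtain ⟨θ, hθ, heq⟩ := exists_prod_pow_eq_one_add_mul_prod_exp T hcos hpair
  refine ⟨θ, hθ.trans ?_, by simpa only [T, prod_sigma] using heq⟩
  have hε : #T * (C * N / n) ≤ C * N ^ 3 / n := calc
    _ ≤ N ^ 2 * (C * N / n) := by gcongr
    _ = C * N ^ 3 / n := by ring
  have hεC : C * N ^ 3 / n ≤ C := by
    rw [div_le_iff₀ hn0]
    exact mul_le_mul_of_nonneg_left hN3 (by positivity)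
  calc #T * (C * N / n) * exp (#T * (C * N / n)) ≤ C * N ^ 3 / n * exp C := by
        gcongr; exact hε.trans hεC
    _ = C * exp C * N ^ 3 / n := by ring
end

section
/- There is an absolute constant A > 0 such that for all integers n and N with 2 ≤ N and N³ ≤ n, there exists a real number p with |p| ≤ A·N³/n such that ∏_{l=1}^{N−1} ∏_{m=1}^{l} ω_{n−m}/(ω_{n−m+1}·√n) = (1/√(2π))^{C(N,2)} · (1 + p). -/
/-!
With `k = n - m`, each factor is `(2π)^{-1/2} · √(2/n) · Γ(k/2 + 1/2) / Γ(k/2)`.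
Log-convexity of `Γ` gives Gautschi's bounds `√(x - 1/2) ≤ Γ(x + 1/2) / Γ(x) ≤ √x`, so
once `(2π)^{-1/2}` is pulled out each of the `C(N, 2)` factors lies in `[1 - N/n, 1]`. Bernoulli's
inequality then bounds the product below by `1 - C(N, 2) · N/n ≥ 1 - N³/n`.
-/

open Real Finset

/-- ω_k = 2·π^{k/2}/Γ(k/2), the (k-1)-dimensional surface volume of S^{k-1} ⊂ ℝ^k. -/
noncomputable def sphereVol (k : ℕ) : ℝ :=
  2 * Real.pi ^ ((k : ℝ) / 2) / Real.Gamma ((k : ℝ) / 2)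

namespace Real

lemma Gamma_add_half_le_sqrt_Gamma_mul_Gamma_add_one {x : ℝ} (hx : 0 < x) :
    Gamma (x + 1 / 2) ≤ √(Gamma x * Gamma (x + 1)) := by
  have h := Gamma_mul_add_mul_le_rpow_Gamma_mul_rpow_Gamma hx (by linarith : 0 < x + 1)
    one_half_pos one_half_pos (add_halves 1)
  rw [sqrt_eq_rpow, mul_rpow (Gamma_pos_of_pos hx).le (Gamma_pos_of_pos (by linarith)).le]
  convert h using 2
  ring

lemma sqrt_Gamma_mul_Gamma_add_one {x : ℝ} (hx : 0 < x) :
    √(Gamma x * Gamma (x + 1)) = √x * Gamma x := by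
  rw [Gamma_add_one hx.ne', mul_left_comm, sqrt_mul hx.le, sqrt_mul_self (Gamma_pos_of_pos hx).le]

lemma Gamma_add_half_div_Gamma_le_sqrt {x : ℝ} (hx : 0 < x) :
    Gamma (x + 1 / 2) / Gamma x ≤ √x := by
  rw [div_le_iff₀ (Gamma_pos_of_pos hx), ← sqrt_Gamma_mul_Gamma_add_one hx]
  exact Gamma_add_half_le_sqrt_Gamma_mul_Gamma_add_one hx

lemma div_sqrt_add_half_le_Gamma_add_half_div_Gamma {x : ℝ} (hx : 0 < x) :
    x / √(x + 1 / 2) ≤ Gamma (x + 1 / 2) / Gamma x := by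
  have hx' : 0 < x + 1 / 2 := by linarith
  have h := Gamma_add_half_le_sqrt_Gamma_mul_Gamma_add_one hx'
  rw [add_assoc, add_halves, sqrt_Gamma_mul_Gamma_add_one hx', Gamma_add_one hx.ne'] at h
  rw [div_le_div_iff₀ (sqrt_pos.2 hx') (Gamma_pos_of_pos hx)]
  linarith

lemma sqrt_sub_half_le_Gamma_add_half_div_Gamma {x : ℝ} (hx : 0 < x) :
    √(x - 1 / 2) ≤ Gamma (x + 1 / 2) / Gamma x := by
  refine le_trans ?_ (div_sqrt_add_half_le_Gamma_add_half_div_Gamma hx)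
  rw [le_div_iff₀ (sqrt_pos.2 (by linarith)), ← sqrt_mul' _ (by linarith)]
  calc √((x - 1 / 2) * (x + 1 / 2)) ≤ √(x ^ 2) := sqrt_le_sqrt (by nlinarith)
    _ = x := sqrt_sq hx.le

end Real

lemma sphereVol_div_sphereVol_add_one (k : ℕ) :
    sphereVol k / sphereVol (k + 1) = Gamma (k / 2 + 1 / 2) / (√π * Gamma (k / 2)) := by
  have hG : Gamma (k / 2 + 1 / 2) ≠ 0 := (Gamma_pos_of_pos (by positivity)).ne'
  have hπ : π ^ ((k : ℝ) / 2) ≠ 0 := (rpow_pos_of_pos pi_pos _).ne'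
  unfold sphereVol
  rw [Nat.cast_add_one, add_div, rpow_add pi_pos, ← sqrt_eq_rpow]
  field_simp

lemma sum_Icc_one_pred_id (N : ℕ) : ∑ l ∈ Icc 1 (N - 1), l = N.choose 2 := by
  induction N with
  | zero => rfl
  | succ N ih =>
    rcases N with _ | N
    · rfl
    rw [Nat.add_sub_cancel, sum_Icc_succ_top (by omega)] at *
    rw [ih, Nat.choose_succ_succ' (N + 1) 1, Nat.choose_one_right, add_comm]

lemma card_sigma_Icc_one_Icc_one (N : ℕ) :
    #((Icc 1 (N - 1)).sigma (Icc 1)) = N.choose 2 := by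
  rw [card_sigma, ← sum_Icc_one_pred_id]
  exact sum_congr rfl fun l _ => by rw [Nat.card_Icc, Nat.add_sub_cancel]

lemma sqrt_two_pi_mul_sphereVol_div (k n : ℕ) :
    √(2 * π) * (sphereVol k / (sphereVol (k + 1) * √n)) =
      √(2 / n) * (Gamma (k / 2 + 1 / 2) / Gamma (k / 2)) := by
  rw [← div_div, sphereVol_div_sphereVol_add_one, sqrt_mul zero_le_two, sqrt_div zero_le_two]
  have := sqrt_pos.2 pi_pos
  field_simp

lemma sqrt_sub_one_div_le_sqrt_two_pi_mul_sphereVol_div {k : ℕ} (hk : 1 ≤ k) (n : ℕ) :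
    √((k - 1) / n) ≤ √(2 * π) * (sphereVol k / (sphereVol (k + 1) * √n)) := by
  rw [sqrt_two_pi_mul_sphereVol_div]
  calc √((k - 1) / n) = √(2 / n) * √(k / 2 - 1 / 2) := by
        rw [← sqrt_mul (by positivity)]; congr 1; ring
    _ ≤ _ := by
      gcongr
      exact sqrt_sub_half_le_Gamma_add_half_div_Gamma (by positivity)

lemma sqrt_two_pi_mul_sphereVol_div_le_sqrt {k : ℕ} (hk : 1 ≤ k) (n : ℕ) :
    √(2 * π) * (sphereVol k / (sphereVol (k + 1) * √n)) ≤ √(k / n) := by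
  rw [sqrt_two_pi_mul_sphereVol_div]
  calc _ ≤ √(2 / n) * √(k / 2) := by
        gcongr
        exact Gamma_add_half_div_Gamma_le_sqrt (by positivity)
    _ = √(k / n) := by rw [← sqrt_mul (by positivity)]; congr 1; ring

lemma Finset.one_sub_card_mul_le_prod {ι : Type*} (s : Finset ι) {f : ι → ℝ} {ε : ℝ}
    (hε : ε ≤ 1) (hf : ∀ i ∈ s, 1 - ε ≤ f i) : 1 - #s * ε ≤ ∏ i ∈ s, f i :=
  calc 1 - #s * ε = 1 + #s * (-ε) := by ring
    _ ≤ (1 + -ε) ^ #s := one_add_mul_le_pow (by linarith) _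
    _ = ∏ _i ∈ s, (1 - ε) := by rw [prod_const, ← sub_eq_add_neg]
    _ ≤ ∏ i ∈ s, f i := prod_le_prod (fun _ _ => by linarith) hf

lemma sqrt_two_pi_mul_sphereVol_sub_div_mem_Icc {m n N : ℕ} (hm : 1 ≤ m) (hmN : m < N)
    (hNn : N ≤ n) :
    √(2 * π) * (sphereVol (n - m) / (sphereVol (n - m + 1) * √n)) ∈
      Set.Icc (1 - (N : ℝ) / n) 1 := by
  have hn : (n : ℝ) ≠ 0 := by exact_mod_cast (by omega : n ≠ 0)
  have hk : ((n - m : ℕ) : ℝ) = n - m := Nat.cast_sub (by omega)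
  have hmN' : (m : ℝ) + 1 ≤ N := by exact_mod_cast hmN
  constructor
  · calc (1 : ℝ) - N / n ≤ 1 - (m + 1) / n := by gcongr
      _ = ((n - m : ℕ) - 1) / n := by rw [hk]; field_simp; ring
      _ ≤ √(((n - m : ℕ) - 1) / n) := le_sqrt_self_iff.2 <|
          div_le_one_of_le₀ (by linarith [m.cast_nonneg (α := ℝ)]) n.cast_nonneg
      _ ≤ _ := sqrt_sub_one_div_le_sqrt_two_pi_mul_sphereVol_div (by omega) n
  · refine (sqrt_two_pi_mul_sphereVol_div_le_sqrt (by omega) n).trans (sqrt_le_one.2 ?_)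
    exact div_le_one_of_le₀ (by exact_mod_cast n.sub_le m) n.cast_nonneg

/-- ∏_{l=1}^{N-1} ∏_{m=1}^{l} ω_{n-m}/(ω_{n-m+1}·√n)
= (1/√(2π))^{C(N,2)}·(1+p) with |p| ≤ A·N³/n. -/
theorem prod_sphere_vol_ratio :
    ∃ A : ℝ, 0 < A ∧
      ∀ (n N : ℕ), 2 ≤ N → N ^ 3 ≤ n →
      ∃ p : ℝ, |p| ≤ A * (N : ℝ) ^ 3 / (n : ℝ) ∧
        (∏ l ∈ Finset.Icc 1 (N - 1), ∏ m ∈ Finset.Icc 1 l,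
            sphereVol (n - m) / (sphereVol (n - m + 1) * Real.sqrt n)) =
        (Real.sqrt (2 * Real.pi))⁻¹ ^ (N.choose 2) * (1 + p) := by
  refine ⟨1, one_pos, fun n N _ hNn => ?_⟩
  replace hNn : N ≤ n := (Nat.le_self_pow three_ne_zero N).trans hNn
  set S := (Icc 1 (N - 1)).sigma (Icc 1)
  set F : ℕ → ℝ := fun m => √(2 * π) * (sphereVol (n - m) / (sphereVol (n - m + 1) * √n))
  set ε : ℝ := N / n
  have hε : ε ≤ 1 := div_le_one_of_le₀ (by exact_mod_cast hNn) n.cast_nonneg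
  have hF : ∀ x ∈ S, F x.2 ∈ Set.Icc (1 - ε) 1 := by
    rintro ⟨l, m⟩ hx
    simp only [S, mem_sigma, mem_Icc] at hx
    exact sqrt_two_pi_mul_sphereVol_sub_div_mem_Icc (m := m) hx.2.1 (by omega) hNn
  have hprod : (∏ l ∈ Icc 1 (N - 1), ∏ m ∈ Icc 1 l,
      sphereVol (n - m) / (sphereVol (n - m + 1) * √n)) =
        (√(2 * π))⁻¹ ^ N.choose 2 * ∏ x ∈ S, F x.2 := by
    rw [prod_sigma', ← card_sigma_Icc_one_Icc_one, ← prod_const, ← prod_mul_distrib]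
    exact prod_congr rfl fun x _ => (inv_mul_cancel_left₀ (sqrt_pos.2 two_pi_pos).ne' _).symm
  have hlow := one_sub_card_mul_le_prod S hε fun x hx => (hF x hx).1
  have hup : ∏ x ∈ S, F x.2 ≤ 1 :=
    prod_le_one (fun x hx => by linarith [(hF x hx).1, hε]) fun x hx => (hF x hx).2
  have herr : (N.choose 2 : ℝ) * ε ≤ 1 * N ^ 3 / n := by
    rw [one_mul, pow_succ, mul_div_assoc]
    gcongr
    exact_mod_cast N.choose_le_pow 2
  rw [card_sigma_Icc_one_Icc_one] at hlow
  refine ⟨∏ x ∈ S, F x.2 - 1, abs_le.2 ⟨by linarith, ?_⟩, by rw [hprod]; ring⟩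
  linarith [show (0 : ℝ) ≤ 1 * N ^ 3 / n by positivity]
end

section
/- For every K > 0 there exists an integer N₀ such that for all integers N ≥ N₀, the hypercube (π/2, …, π/2) + N^{−3}·[−K, K]^{C(N,2)} is contained in Ω_N := J_N((0,π)^{C(N,2)}); that is, for every point (x_{ij})_{1≤i<j≤N} with |x_{ij} − π/2| ≤ K·N^{−3} for all i < j, there exist φ_{ij} ∈ (0,π) such that α_{ij}(φ_{1i}, φ_{1j}, …, φ_{i−1,i}, φ_{i−1,j}, φ_{ij}) = x_{ij} for all 1 ≤ i < j ≤ N. -/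
open Real Finset

/-!
Solve for the angles row by row: once the rows `m < i` are chosen, `F` and `X` are fixed and
`φ_ij = arccos ((cos x_ij - F) / X)` makes `α_ij = x_ij`. The invariant is `|cos φ_mj| ≤ ε := 2K/N³`
for all earlier angles. It gives `|F| ≤ N ε²` and `X ≥ 1 - N ε²`, and `N ε² ≤ K/(4N³)` as soon as
`N² ≥ 16K`; together with `|cos x_ij| ≤ K/N³` this bounds the new argument of `arccos` by `ε` again.
-/

/-- F in the expression for α_{ij}. -/
noncomputable def Fphi (φ : ℕ → ℕ → ℝ) (i j : ℕ) : ℝ :=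
  ∑ m ∈ Finset.Icc 1 (i - 1), Real.cos (φ m i) * Real.cos (φ m j) *
    ∏ l ∈ Finset.Icc 1 (m - 1), (Real.sin (φ l i) * Real.sin (φ l j))

/-- X in the expression for α_{ij}. -/
noncomputable def Xphi (φ : ℕ → ℕ → ℝ) (i j : ℕ) : ℝ :=
  ∏ m ∈ Finset.Icc 1 (i - 1), (Real.sin (φ m i) * Real.sin (φ m j))

/-- α_{ij} = φ_{ij} if i = 1, and arccos(F + cos(φ_{ij})·X) if i ≥ 2. -/
noncomputable def alphaMap (φ : ℕ → ℕ → ℝ) (i j : ℕ) : ℝ :=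
  if i = 1 then φ i j
  else Real.arccos (Fphi φ i j + Real.cos (φ i j) * Xphi φ i j)

lemma Fphi_congr {φ ψ : ℕ → ℕ → ℝ} {i j : ℕ}
    (h : ∀ m ∈ Icc 1 (i - 1), φ m i = ψ m i ∧ φ m j = ψ m j) :
    Fphi φ i j = Fphi ψ i j := by
  refine sum_congr rfl fun m hm => ?_
  have hsub : Icc 1 (m - 1) ⊆ Icc 1 (i - 1) := Icc_subset_Icc le_rfl (by grind)
  rw [(h m hm).1, (h m hm).2,
    prod_congr rfl fun l hl => by rw [(h l (hsub hl)).1, (h l (hsub hl)).2]]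

lemma Xphi_congr {φ ψ : ℕ → ℕ → ℝ} {i j : ℕ}
    (h : ∀ m ∈ Icc 1 (i - 1), φ m i = ψ m i ∧ φ m j = ψ m j) :
    Xphi φ i j = Xphi ψ i j :=
  prod_congr rfl fun m hm => by rw [(h m hm).1, (h m hm).2]

lemma alphaMap_eq_arccos {φ : ℕ → ℕ → ℝ} {i j : ℕ} (h0 : 0 ≤ φ i j) (hπ : φ i j ≤ π) :
    alphaMap φ i j = arccos (Fphi φ i j + cos (φ i j) * Xphi φ i j) := by
  unfold alphaMap
  split_ifs with hi
  · subst hi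
    simp [Fphi, Xphi, arccos_cos h0 hπ]
  · rfl

lemma abs_Fphi_le {φ : ℕ → ℕ → ℝ} {i j : ℕ} {ε : ℝ}
    (hcos : ∀ m ∈ Icc 1 (i - 1), |cos (φ m i)| ≤ ε ∧ |cos (φ m j)| ≤ ε) :
    |Fphi φ i j| ≤ (i - 1 : ℕ) * ε ^ 2 := by
  have hterm : ∀ m ∈ Icc 1 (i - 1), |cos (φ m i) * cos (φ m j) *
      ∏ l ∈ Icc 1 (m - 1), (sin (φ l i) * sin (φ l j))| ≤ ε ^ 2 := by
    intro m hm
    have hprod : |∏ l ∈ Icc 1 (m - 1), (sin (φ l i) * sin (φ l j))| ≤ 1 := by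
      rw [abs_prod]
      refine prod_le_one (fun _ _ => abs_nonneg _) fun l _ => ?_
      rw [abs_mul]
      exact mul_le_one₀ (abs_sin_le_one _) (abs_nonneg _) (abs_sin_le_one _)
    obtain ⟨hi, hj⟩ := hcos m hm
    rw [abs_mul, abs_mul, sq]
    calc |cos (φ m i)| * |cos (φ m j)| * |∏ l ∈ Icc 1 (m - 1), (sin (φ l i) * sin (φ l j))|
        ≤ |cos (φ m i)| * |cos (φ m j)| := mul_le_of_le_one_right (by positivity) hprod
      _ ≤ ε * ε := mul_le_mul hi hj (abs_nonneg _) ((abs_nonneg _).trans hi)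
  calc |Fphi φ i j| ≤ ∑ m ∈ Icc 1 (i - 1), ε ^ 2 :=
        (abs_sum_le_sum_abs _ _).trans (sum_le_sum hterm)
    _ = (i - 1 : ℕ) * ε ^ 2 := by simp

lemma one_sub_sq_le_sin_mul_sin {a b ε : ℝ} (ha : 0 ≤ sin a) (hb : 0 ≤ sin b)
    (hca : |cos a| ≤ ε) (hcb : |cos b| ≤ ε) : 1 - ε ^ 2 ≤ sin a * sin b := by
  have hsa : 1 - ε ^ 2 ≤ sin a ^ 2 := by
    nlinarith [sin_sq_add_cos_sq a, sq_abs (cos a), abs_nonneg (cos a)]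
  have hsb : 1 - ε ^ 2 ≤ sin b ^ 2 := by
    nlinarith [sin_sq_add_cos_sq b, sq_abs (cos b), abs_nonneg (cos b)]
  -- `sin a * sin b` is at least the square of the smaller factor
  rcases le_total (sin a) (sin b) with h | h <;> nlinarith

lemma one_sub_le_Xphi {φ : ℕ → ℕ → ℝ} {i j : ℕ} {ε : ℝ} (hε₀ : 0 ≤ ε) (hε₁ : ε ≤ 1)
    (hφ : ∀ m ∈ Icc 1 (i - 1), (0 ≤ sin (φ m i) ∧ |cos (φ m i)| ≤ ε) ∧
      (0 ≤ sin (φ m j) ∧ |cos (φ m j)| ≤ ε)) :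
    1 - (i - 1 : ℕ) * ε ^ 2 ≤ Xphi φ i j := by
  have hε2 : ε ^ 2 ≤ 1 := pow_le_one₀ hε₀ hε₁
  calc 1 - (i - 1 : ℕ) * ε ^ 2 = 1 + (i - 1 : ℕ) * -ε ^ 2 := by ring
    _ ≤ (1 + -ε ^ 2) ^ (i - 1) := one_add_mul_le_pow (by linarith) _
    _ = ∏ _m ∈ Icc 1 (i - 1), (1 - ε ^ 2) := by simp [sub_eq_add_neg]
    _ ≤ Xphi φ i j := prod_le_prod (fun _ _ => by linarith) fun m hm =>
        one_sub_sq_le_sin_mul_sin (hφ m hm).1.1 (hφ m hm).2.1 (hφ m hm).1.2 (hφ m hm).2.2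

lemma abs_sub_div_le_two_mul {c F X A : ℝ} (hc : |c| ≤ A) (hF : |F| ≤ A / 4) (hX : 1 - A / 4 ≤ X)
    (hA : A ≤ 1) : |(c - F) / X| ≤ 2 * A := by
  have hA₀ : 0 ≤ A := (abs_nonneg c).trans hc
  have hX₀ : 0 < X := by linarith
  rw [abs_div, abs_of_pos hX₀, div_le_iff₀ hX₀]
  calc |c - F| ≤ |c| + |F| := abs_sub _ _
    _ ≤ 2 * A * (1 - A / 4) := by nlinarith
    _ ≤ 2 * A * X := by gcongr

lemma arccos_mem_Ioo {t : ℝ} (ht : |t| < 1) : arccos t ∈ Set.Ioo 0 π :=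
  ⟨arccos_pos.2 (abs_lt.1 ht).2, arccos_lt_pi.2 (abs_lt.1 ht).1⟩

lemma abs_cos_le_abs_sub_pi_div_two (y : ℝ) : |cos y| ≤ |y - π / 2| := by
  rw [← sin_pi_div_two_sub, abs_sub_comm]
  exact abs_sin_le_abs

-- Rows `m ≥ i` are masked only to make the recursion well founded; `solveAngles_eq` drops the mask.
noncomputable def solveAngles (x : ℕ → ℕ → ℝ) (i j : ℕ) : ℝ :=
  let ψ : ℕ → ℕ → ℝ := fun m k => if m < i then solveAngles x m k else 0
  arccos ((cos (x i j) - Fphi ψ i j) / Xphi ψ i j)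
termination_by i

lemma solveAngles_eq (x : ℕ → ℕ → ℝ) (i j : ℕ) :
    solveAngles x i j =
      arccos ((cos (x i j) - Fphi (solveAngles x) i j) / Xphi (solveAngles x) i j) := by
  have h : ∀ m ∈ Icc 1 (i - 1), ∀ k,
      (if m < i then solveAngles x m k else 0) = solveAngles x m k := fun m hm k =>
    if_pos (by grind)
  rw [solveAngles, Fphi_congr fun m hm => ⟨h m hm i, h m hm j⟩,
    Xphi_congr fun m hm => ⟨h m hm i, h m hm j⟩]

theorem solveAngles_spec {x : ℕ → ℕ → ℝ} {N : ℕ} {A : ℝ} (hNA : 16 * N * A ≤ 1)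
    (hx : ∀ i j, 1 ≤ i → i < j → j ≤ N → |x i j - π / 2| ≤ A) (i : ℕ) :
    ∀ j, 1 ≤ i → i < j → j ≤ N →
      solveAngles x i j ∈ Set.Ioo 0 π ∧ |cos (solveAngles x i j)| ≤ 2 * A ∧
        arccos (Fphi (solveAngles x) i j +
          cos (solveAngles x i j) * Xphi (solveAngles x) i j) = x i j := by
  induction i using Nat.strong_induction_on with
  | _ i ih =>
  intro j hi hij hjN
  set φ := solveAngles x
  have hxA := hx i j hi hij hjN
  have hA₀ : 0 ≤ A := (abs_nonneg _).trans hxA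
  have hA : 32 * A ≤ 1 := by
    have : (2 : ℝ) ≤ N := by exact_mod_cast (by omega : 2 ≤ N)
    nlinarith
  have hrow : ∀ m ∈ Icc 1 (i - 1), (0 ≤ sin (φ m i) ∧ |cos (φ m i)| ≤ 2 * A) ∧
      (0 ≤ sin (φ m j) ∧ |cos (φ m j)| ≤ 2 * A) := by
    intro m hm
    rw [mem_Icc] at hm
    obtain ⟨⟨hmi₀, hmiπ⟩, hmi, -⟩ := ih m (by omega) i hm.1 (by omega) (by omega)
    obtain ⟨⟨hmj₀, hmjπ⟩, hmj, -⟩ := ih m (by omega) j hm.1 (by omega) hjN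
    exact ⟨⟨(sin_pos_of_pos_of_lt_pi hmi₀ hmiπ).le, hmi⟩,
      (sin_pos_of_pos_of_lt_pi hmj₀ hmjπ).le, hmj⟩
  have hsmall : ((i - 1 : ℕ) : ℝ) * (2 * A) ^ 2 ≤ A / 4 := by
    have : ((i - 1 : ℕ) : ℝ) ≤ N := by exact_mod_cast (by omega : i - 1 ≤ N)
    nlinarith
  have hF := (abs_Fphi_le fun m hm => ⟨(hrow m hm).1.2, (hrow m hm).2.2⟩).trans hsmall
  have hX : 1 - A / 4 ≤ Xphi φ i j := by
    linarith [one_sub_le_Xphi (by positivity) (by linarith) hrow]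
  set t := (cos (x i j) - Fphi φ i j) / Xphi φ i j with ht_def
  have ht : |t| ≤ 2 * A :=
    abs_sub_div_le_two_mul ((abs_cos_le_abs_sub_pi_div_two _).trans hxA) hF hX (by linarith)
  have hφ : φ i j = arccos t := solveAngles_eq x i j
  have hcos : cos (φ i j) = t := by
    rw [hφ]
    exact cos_arccos (by linarith [neg_abs_le t]) (by linarith [le_abs_self t])
  refine ⟨hφ ▸ arccos_mem_Ioo (by linarith), hcos ▸ ht, ?_⟩
  have hxπ := abs_le.1 hxA
  rw [hcos, ht_def, div_mul_cancel₀ _ (by linarith), add_sub_cancel,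
    arccos_cos (by linarith [pi_gt_three]) (by linarith [pi_gt_three])]

theorem center_hypercube_subset_OmegaN_general (K : ℝ) :
    ∃ N₀ : ℕ, ∀ N : ℕ, N₀ ≤ N →
      ∀ x : ℕ → ℕ → ℝ,
        (∀ i j : ℕ, 1 ≤ i → i < j → j ≤ N → |x i j - Real.pi / 2| ≤ K / (N : ℝ) ^ 3) →
        ∃ φ : ℕ → ℕ → ℝ, ∀ i j : ℕ, 1 ≤ i → i < j → j ≤ N →
          φ i j ∈ Set.Ioo (0 : ℝ) Real.pi ∧ alphaMap φ i j = x i j := by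
  refine ⟨max 1 ⌈16 * K⌉₊, fun N hN x hx => ⟨solveAngles x, fun i j hi hij hjN => ?_⟩⟩
  have hN₁ : (1 : ℝ) ≤ N := by exact_mod_cast le_of_max_le_left hN
  have hKN : 16 * K ≤ N := (Nat.le_ceil _).trans (by exact_mod_cast le_of_max_le_right hN)
  have hNA : 16 * N * (K / N ^ 3) ≤ 1 := by
    rw [mul_div_assoc', div_le_one (by positivity)]
    nlinarith [mul_le_mul_of_nonneg_left hKN (by positivity : (0 : ℝ) ≤ N ^ 2)]
  obtain ⟨hmem, -, hα⟩ := solveAngles_spec hNA hx i j hi hij hjN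
  exact ⟨hmem, (alphaMap_eq_arccos hmem.1.le hmem.2.le).trans hα⟩

/-- for every K > 0 and N large, the hypercube
(π/2,…,π/2) + N^{−3}·[−K,K]^{C(N,2)} is contained in Ω_N = J_N((0,π)^{C(N,2)}). -/
theorem center_hypercube_subset_OmegaN (K : ℝ) (hK : 0 < K) :
    ∃ N₀ : ℕ, ∀ N : ℕ, N₀ ≤ N →
      ∀ x : ℕ → ℕ → ℝ,
        (∀ i j : ℕ, 1 ≤ i → i < j → j ≤ N → |x i j - Real.pi / 2| ≤ K / (N : ℝ) ^ 3) →
        ∃ φ : ℕ → ℕ → ℝ, ∀ i j : ℕ, 1 ≤ i → i < j → j ≤ N →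
          φ i j ∈ Set.Ioo (0 : ℝ) Real.pi ∧ alphaMap φ i j = x i j :=
  center_hypercube_subset_OmegaN_general K
end

section
/- Let λ > 0 and let x be a real number with x > λ. Then Σ_{k ∈ ℕ, k ≥ x} λ^k/k! ≤ (eλ/x)^x. Equivalently, if X is a Poisson random variable with mean λ, then P(X ≥ x) ≤ e^{−λ}·(eλ/x)^x. -/
open Real

/-! Chernoff's trick: for `k ≥ x` we have `(l/x)^k ≤ (l/x)^x` since `l/x ≤ 1`, so each tail term
`l^k/k!` is at most `(l/x)^x · x^k/k!`. Summing over all `k` gives `(l/x)^x · e^x = (e l/x)^x`. -/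

lemma pow_le_div_rpow_mul_pow {l x : ℝ} (hl : 0 < l) (hlx : l ≤ x) {k : ℕ} (hk : x ≤ k) :
    l ^ k ≤ (l / x) ^ x * x ^ k := by
  have hx : 0 < x := hl.trans_le hlx
  calc l ^ k = (l / x) ^ (k : ℝ) * x ^ k := by
        rw [rpow_natCast, ← mul_pow, div_mul_cancel₀ l hx.ne']
    _ ≤ (l / x) ^ x * x ^ k := by
        have hpow := rpow_le_rpow_of_exponent_ge (by positivity) ((div_le_one hx).2 hlx) hk
        gcongr

lemma tsum_ite_pow_div_factorial_le {l x : ℝ} (hl : 0 < l) (hlx : l ≤ x) :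
    (∑' k : ℕ, if x ≤ (k : ℝ) then l ^ k / (k.factorial : ℝ) else 0) ≤ (l / x) ^ x * exp x := by
  have hexp : HasSum (fun k : ℕ ↦ (l / x) ^ x * (x ^ k / k.factorial)) ((l / x) ^ x * exp x) := by
    rw [exp_eq_exp_ℝ]
    exact (NormedSpace.expSeries_div_hasSum_exp x).mul_left _
  have hle : ∀ k : ℕ, (if x ≤ (k : ℝ) then l ^ k / (k.factorial : ℝ) else 0)
      ≤ (l / x) ^ x * (x ^ k / k.factorial) := by
    intro k
    split_ifs with hk
    · rw [← mul_div_assoc]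
      gcongr
      exact pow_le_div_rpow_mul_pow hl hlx hk
    · have : 0 < x := hl.trans_le hlx
      positivity
  have hsum := hexp.summable.of_nonneg_of_le (fun k ↦ by positivity) hle
  exact (hsum.tsum_le_tsum hle hexp.summable).trans_eq hexp.tsum_eq

/-- Poisson tail bound: for 0 < λ < x,
Σ_{k ≥ x} λ^k/k! ≤ (eλ/x)^x; equivalently, for X Poisson with mean λ,
P(X ≥ x) = e^{−λ}·Σ_{k ≥ x} λ^k/k! ≤ e^{−λ}·(eλ/x)^x. -/
theorem poisson_tail_bound (l x : ℝ) (hl : 0 < l) (hx : l < x) :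
    (∑' k : ℕ, if x ≤ (k : ℝ) then l ^ k / (Nat.factorial k : ℝ) else 0)
      ≤ (Real.exp 1 * l / x) ^ x := by
  have hx0 : 0 < x := hl.trans hx
  calc _ ≤ (l / x) ^ x * exp x := tsum_ite_pow_div_factorial_le hl hx.le
    _ = (exp 1 * l / x) ^ x := by
        rw [← exp_one_rpow, ← mul_rpow (by positivity) (exp_pos 1).le, mul_div_assoc, mul_comm]
end
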